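/- Let u : ℝⁿ → ℝ be η-strongly convex, let 0 < η̃ < η, and let f ∈ C²(ℝⁿ) satisfy n · max_{|α|=2} ‖D^α f‖_∞ ≤ η − η̃, where the maximum is over multi-indices α of order 2 and ‖·‖_∞ is the supremum norm over ℝⁿ. Then u + f is η̃-strongly convex. -/

import Mathlib

/-!
Each second partial derivative of `f` is at most `(η - η̃)/n` in absolute value, so
`(∑ |vᵢ|)² ≤ n ‖v‖²` gives `|D²f(x)(v, v)| ≤ (η - η̃) ‖v‖²`. Hence `f + (η - η̃)/2 ‖·‖²` has a
nonnegative second derivative along every line and is convex, and `u + f - η̃/2 ‖·‖²` is its sum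
with the convex function `u - η/2 ‖·‖²`.
-/

open MeasureTheory Metric Set Filter
open scoped ENNReal

/-- `u : ℝⁿ → ℝ` is `η`-strongly convex: `x ↦ u x - (η/2)‖x‖²` is convex. -/
def StronglyConvexWith {n : ℕ} (η : ℝ) (u : EuclideanSpace ℝ (Fin n) → ℝ) : Prop :=
  ConvexOn ℝ Set.univ (fun x => u x - η / 2 * ‖x‖ ^ 2)

open scoped RealInnerProductSpace

theorem EuclideanSpace.bilinear_apply_eq_sum {ι : Type*} [Fintype ι] [DecidableEq ι]
    (L : EuclideanSpace ℝ ι →L[ℝ] EuclideanSpace ℝ ι →L[ℝ] ℝ) (v w : EuclideanSpace ℝ ι) :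
    L v w = ∑ i, ∑ j, v i * w j * L (single i 1) (single j 1) := by
  have hsum (x : EuclideanSpace ℝ ι) : x = ∑ i, x i • single i 1 := by
    simpa using ((EuclideanSpace.basisFun ι ℝ).sum_repr x).symm
  conv_lhs => rw [hsum v, hsum w]
  simp only [map_sum, map_smul, FunLike.coe_sum, Finset.sum_apply,
    FunLike.coe_smul, Pi.smul_apply, smul_eq_mul, Finset.mul_sum]
  rw [Finset.sum_comm]
  exact Finset.sum_congr rfl fun i _ => Finset.sum_congr rfl fun j _ => by ring

theorem abs_sum_sum_mul_mul_le {ι : Type*} [Fintype ι] (a : ι → ι → ℝ) (v : ι → ℝ) (M : ℝ)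
    (ha : ∀ i j, |a i j| ≤ M) :
    |∑ i, ∑ j, v i * v j * a i j| ≤ Fintype.card ι * M * ∑ i, v i ^ 2 := by
  rcases isEmpty_or_nonempty ι with hι | ⟨⟨i₀⟩⟩
  · simp
  have hM : 0 ≤ M := (abs_nonneg _).trans (ha i₀ i₀)
  calc |∑ i, ∑ j, v i * v j * a i j|
      ≤ ∑ i, ∑ j, |v i| * |v j| * M := by
        refine (Finset.abs_sum_le_sum_abs _ _).trans <| Finset.sum_le_sum fun i _ =>
          (Finset.abs_sum_le_sum_abs _ _).trans <| Finset.sum_le_sum fun j _ => ?_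
        rw [abs_mul, abs_mul]
        exact mul_le_mul_of_nonneg_left (ha i j) (by positivity)
    _ = (∑ i, |v i|) ^ 2 * M := by
        rw [sq, Finset.sum_mul_sum, Finset.sum_mul]
        exact Finset.sum_congr rfl fun i _ => by rw [Finset.sum_mul]
    _ ≤ (Fintype.card ι * ∑ i, |v i| ^ 2) * M := by
        gcongr
        simpa using sq_sum_le_card_mul_sum_sq (s := Finset.univ) (f := fun i => |v i|)
    _ = Fintype.card ι * M * ∑ i, v i ^ 2 := by
        simp only [sq_abs]; ring

theorem EuclideanSpace.abs_bilinear_apply_self_le {ι : Type*} [Fintype ι] [DecidableEq ι]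
    (L : EuclideanSpace ℝ ι →L[ℝ] EuclideanSpace ℝ ι →L[ℝ] ℝ) (c : ℝ)
    (hL : ∀ i j, Fintype.card ι * |L (single i 1) (single j 1)| ≤ c) (v : EuclideanSpace ℝ ι) :
    |L v v| ≤ c * ‖v‖ ^ 2 := by
  rcases isEmpty_or_nonempty ι with hι | hι
  · simp [Subsingleton.elim v 0]
  have hcard : (0 : ℝ) < Fintype.card ι := by exact_mod_cast Fintype.card_pos
  calc |L v v| ≤ Fintype.card ι * (c / Fintype.card ι) * ∑ i, v i ^ 2 := by
        rw [bilinear_apply_eq_sum]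
        exact abs_sum_sum_mul_mul_le _ _ _ fun i j => (le_div_iff₀' hcard).2 (hL i j)
    _ = c * ‖v‖ ^ 2 := by
        rw [mul_div_cancel₀ _ hcard.ne', EuclideanSpace.norm_sq_eq]
        simp

theorem convexOn_univ_of_fderiv_fderiv_nonneg {E : Type*} [NormedAddCommGroup E]
    [NormedSpace ℝ E] {g : E → ℝ} (hg : Differentiable ℝ g) (hg' : Differentiable ℝ (fderiv ℝ g))
    (hg'' : ∀ x v, 0 ≤ fderiv ℝ (fderiv ℝ g) x v v) : ConvexOn ℝ univ g := by
  refine ⟨convex_univ, fun x _ y _ a b ha hb hab => ?_⟩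
  set v := y - x
  have hline (t : ℝ) : HasDerivAt (fun t : ℝ => x + t • v) v t := by
    simpa using ((hasDerivAt_id t).smul_const v).const_add x
  have hφ (t : ℝ) : HasDerivAt (fun t => g (x + t • v)) (fderiv ℝ g (x + t • v) v) t :=
    (hg _).hasFDerivAt.comp_hasDerivAt t (hline t)
  have hφ' (t : ℝ) : HasDerivAt (fun t => fderiv ℝ g (x + t • v) v)
      (fderiv ℝ (fderiv ℝ g) (x + t • v) v v) t :=
    ((ContinuousLinearMap.apply ℝ ℝ v).hasFDerivAt.comp _ (hg' _).hasFDerivAt).comp_hasDerivAt t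
      (hline t)
  have hconv : ConvexOn ℝ univ fun t => g (x + t • v) :=
    convexOn_of_hasDerivWithinAt2_nonneg convex_univ
      (fun t _ => (hφ t).continuousAt.continuousWithinAt) (fun t _ => (hφ t).hasDerivWithinAt)
      (fun t _ => (hφ' t).hasDerivWithinAt) (fun t _ => hg'' _ _)
  have hmid : x + b • v = a • x + b • y := by
    rw [show a = 1 - b by linarith, smul_sub, sub_smul, one_smul]; abel
  simpa [hmid, v] using hconv.2 (mem_univ 0) (mem_univ 1) ha hb hab

theorem fderiv_fderiv_add_mul_norm_sq_apply {F : Type*} [NormedAddCommGroup F]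
    [InnerProductSpace ℝ F] {f : F → ℝ} (hf : Differentiable ℝ f)
    (hf' : Differentiable ℝ (fderiv ℝ f)) (c : ℝ) (x v : F) :
    fderiv ℝ (fderiv ℝ fun y => f y + c / 2 * ‖y‖ ^ 2) x v v
      = fderiv ℝ (fderiv ℝ f) x v v + c * ‖v‖ ^ 2 := by
  have h1 : fderiv ℝ (fun y => f y + c / 2 * ‖y‖ ^ 2) =
      fun y => fderiv ℝ f y + c • innerSL ℝ y := by
    funext y
    refine ((hf y).hasFDerivAt.add
      ((hasStrictFDerivAt_norm_sq y).hasFDerivAt.const_mul (c / 2))).fderiv.trans ?_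
    ext w
    simp only [add_apply, smul_apply, nsmul_eq_mul, smul_eq_mul]
    ring
  -- `innerSL ℝ` is typed as a conjugate-linear map, which `HasFDerivAt` does not accept.
  let B : F →L[ℝ] F →L[ℝ] ℝ := innerSL ℝ
  have h2 : HasFDerivAt (fun y => fderiv ℝ f y + c • B y) (fderiv ℝ (fderiv ℝ f) x + c • B) x :=
    (hf' x).hasFDerivAt.add (B.hasFDerivAt.const_smul c)
  rw [h1, h2.fderiv]
  exact congrArg (fderiv ℝ (fderiv ℝ f) x v v + c * ·) (real_inner_self_eq_norm_sq v)

theorem strongly_convex_add_small_C2_general {n : ℕ}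
    (u : EuclideanSpace ℝ (Fin n) → ℝ) (η : ℝ)
    (hu : StronglyConvexWith η u)
    (η' : ℝ)
    (f : EuclideanSpace ℝ (Fin n) → ℝ) (hf : ContDiff ℝ 2 f)
    (hbound : ∀ i j : Fin n, ∀ x,
      (n : ℝ) * |iteratedFDeriv ℝ 2 f x
        ![EuclideanSpace.single i 1, EuclideanSpace.single j 1]| ≤ η - η') :
    StronglyConvexWith η' (fun x => u x + f x) := by
  have hC2 {g : EuclideanSpace ℝ (Fin n) → ℝ} (hg : ContDiff ℝ 2 g) :
      Differentiable ℝ g ∧ Differentiable ℝ (fderiv ℝ g) :=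
    ⟨hg.differentiable two_ne_zero,
      (hg.fderiv_right one_add_one_eq_two.le).differentiable one_ne_zero⟩
  obtain ⟨hf₁, hf₂⟩ := hC2 hf
  have hHess (x v) : |fderiv ℝ (fderiv ℝ f) x v v| ≤ (η - η') * ‖v‖ ^ 2 := by
    refine EuclideanSpace.abs_bilinear_apply_self_le _ _ (fun i j => ?_) v
    simpa [iteratedFDeriv_two_apply] using hbound i j x
  have hg : ConvexOn ℝ univ fun x => f x + (η - η') / 2 * ‖x‖ ^ 2 := by
    obtain ⟨hg₁, hg₂⟩ := hC2 (hf.add (contDiff_const.mul (contDiff_norm_sq ℝ)))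
    refine convexOn_univ_of_fderiv_fderiv_nonneg hg₁ hg₂ fun x v => ?_
    rw [fderiv_fderiv_add_mul_norm_sq_apply hf₁ hf₂]
    linarith [neg_abs_le (fderiv ℝ (fderiv ℝ f) x v v), hHess x v]
  exact (hu.add hg).congr fun x _ => by simp only [Pi.add_apply]; ring

/-- Adding a `C²` perturbation `f` whose second-order partial derivatives satisfy
`n · max_{|α| = 2} ‖D^α f‖_∞ ≤ η - η̃` to an `η`-strongly convex function yields an
`η̃`-strongly convex function. -/
theorem strongly_convex_add_small_C2 {n : ℕ}
    (u : EuclideanSpace ℝ (Fin n) → ℝ) (η : ℝ) (hη : 0 < η)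
    (hu : StronglyConvexWith η u)
    (η' : ℝ) (hη' : 0 < η') (hη'η : η' < η)
    (f : EuclideanSpace ℝ (Fin n) → ℝ) (hf : ContDiff ℝ 2 f)
    (hbound : ∀ i j : Fin n, ∀ x,
      (n : ℝ) * |iteratedFDeriv ℝ 2 f x
        ![EuclideanSpace.single i 1, EuclideanSpace.single j 1]| ≤ η - η') :
    StronglyConvexWith η' (fun x => u x + f x) :=
  strongly_convex_add_small_C2_general u η hu η' f hf hbound
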